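/- There exists a regular map f : ℝ² → ℝ² (namely f = h ∘ g with g(x,y) = ((x²+1)/(1+x²y²), (y²+1)/(1+x²y²)) and h as in Lemma 4.3) whose image S satisfies S_∞ = {(0:u:1) : 0 ≤ u ≤ 1/2} ∪ {(0:1:v) : 0 ≤ v ≤ 1/2}; in particular the set of points at infinity of a two-dimensional regular image of ℝ² can have exactly two one-dimensional connected components. -/

import Mathlib

/-!
On the image of `g` one coordinate is at most `1`, or both are at most `2`; in the first case `h`
satisfies `y ≤ x / 2 + 1` (or its mirror image), in the second it is bounded. So the image of
`h ∘ g` lies in the region `0 ≤ x, 0 ≤ y, (x ≤ y / 2 + 16 ∨ y ≤ x / 2 + 16)`, whose cone in `ℝ³`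
is closed, and the cone meets `x₀ = 0` exactly over the two segments.
Conversely, along the hyperbola `x y = c` the map `g` tends to `(∞, 1 / (1 + c²))`, and
`h (a, b) → (0 : 1 : b / 2)` as `a → ∞` with `b` bounded; this gives the open segments, and their
closures follow.
-/

open Projectivization Filter Topology Set

noncomputable section

instance (K V : Type*) [DivisionRing K] [AddCommGroup V] [Module K V] [TopologicalSpace V] :
    TopologicalSpace (Projectivization K V) := by
  unfold Projectivization; infer_instance

/-- The embedding of the affine plane `ℝ²` into `ℝP²` as the chart `{x₀ = 1}`. -/
def embR2 (p : ℝ × ℝ) : Projectivization ℝ (Fin 3 → ℝ) :=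
  Projectivization.mk ℝ ![1, p.1, p.2] (by intro h; have := congrFun h 0; simp at this)

/-- The line at infinity `{x₀ = 0}` of `ℝP²`. -/
def lineAtInf : Set (Projectivization ℝ (Fin 3 → ℝ)) := {q | q.rep 0 = 0}

/-- The set of points at infinity of `S ⊆ ℝ²`: the closure of `S` in `ℝP²`
intersected with the line at infinity. -/
def ptsAtInf (S : Set (ℝ × ℝ)) : Set (Projectivization ℝ (Fin 3 → ℝ)) :=
  closure (embR2 '' S) ∩ lineAtInf

open scoped LinearAlgebra.Projectivization

namespace Projectivization

variable {V : Type*} [AddCommGroup V] [TopologicalSpace V]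

section DivisionRing

variable {K : Type*} [DivisionRing K] [Module K V]

theorem continuous_mk' : Continuous (mk' K : {v : V // v ≠ 0} → ℙ K V) :=
  continuous_quotient_mk'

theorem isQuotientMap_mk' : IsQuotientMap (mk' K : {v : V // v ≠ 0} → ℙ K V) :=
  isQuotientMap_quotient_mk'

theorem mk_mem_closure_of_tendsto {α : Type*} {l : Filter α} [l.NeBot] {s : Set (ℙ K V)}
    {w : α → V} {v : V} (hv : v ≠ 0) (hw : Tendsto w l (𝓝 v))
    (hs : ∀ᶠ x in l, ∃ h : w x ≠ 0, mk K (w x) h ∈ s) : mk K v hv ∈ closure s := by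
  have hlift : (⟨v, hv⟩ : {v : V // v ≠ 0}) ∈ closure (mk' K ⁻¹' s) := by
    rw [IsInducing.subtypeVal.closure_eq_preimage_closure_image (mk' K ⁻¹' s)]
    exact mem_closure_of_tendsto hw (hs.mono fun x ⟨h, hx⟩ => ⟨⟨w x, h⟩, hx, rfl⟩)
  exact closure_mono (image_preimage_subset _ _)
    (mem_closure_image continuous_mk'.continuousAt hlift)

end DivisionRing

theorem isClosed_setOf_exists_mk_of_cone [Module ℝ V] [ContinuousNeg V] {C : Set V}
    (hC : IsClosed C) (hcone : ∀ v ∈ C, ∀ t : ℝ, 0 < t → t • v ∈ C) :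
    IsClosed {q : ℙ ℝ V | ∃ v, ∃ hv : v ≠ 0, v ∈ C ∧ mk ℝ v hv = q} := by
  rw [← isQuotientMap_mk'.isClosed_preimage]
  have hpre : mk' ℝ ⁻¹' {q : ℙ ℝ V | ∃ v, ∃ hv : v ≠ 0, v ∈ C ∧ mk ℝ v hv = q} =
      {w | w.1 ∈ C ∨ -w.1 ∈ C} := by
    ext ⟨w, hw⟩
    simp only [mem_preimage, mem_ofPred_eq, mk'_eq_mk]
    constructor
    · rintro ⟨v, hv, hvC, hwv⟩
      obtain ⟨a, rfl⟩ := (mk_eq_mk_iff' ℝ w v hw hv).1 hwv.symm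
      rcases lt_or_gt_of_ne (show a ≠ 0 by rintro rfl; simp at hw) with ha | ha
      · right; simpa [neg_smul] using hcone v hvC (-a) (by linarith)
      · left; exact hcone v hvC a ha
    · rintro (hwC | hwC)
      · exact ⟨w, hw, hwC, rfl⟩
      · exact ⟨-w, neg_ne_zero.2 hw, hwC, (mk_eq_mk_iff' ℝ _ _ _ _).2 ⟨-1, by simp⟩⟩
  rw [hpre]
  exact (hC.preimage continuous_subtype_val).union (hC.preimage continuous_subtype_val.neg)

end Projectivization

theorem mk_mem_lineAtInf_iff {v : Fin 3 → ℝ} (hv : v ≠ 0) : mk ℝ v hv ∈ lineAtInf ↔ v 0 = 0 := by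
  obtain ⟨a, ha⟩ := exists_smul_eq_mk_rep ℝ v hv
  simp [lineAtInf, ← ha, Units.smul_def]

theorem embR2_eq_mk {p : ℝ × ℝ} {v : Fin 3 → ℝ} (hv : v ≠ 0) (t : ℝ)
    (h : t • ![1, p.1, p.2] = v) : embR2 p = mk ℝ v hv :=
  (mk_eq_mk_iff' ℝ _ _ _ hv).2 ⟨t⁻¹, by
    have ht : t ≠ 0 := by rintro rfl; simp [← h] at hv
    simp [← h, ht]⟩

theorem embR2_div {x y d : ℝ} (hd : d ≠ 0) :
    embR2 (x / d, y / d) = mk ℝ ![d, x, y] fun h => hd (congrFun h 0) :=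
  embR2_eq_mk _ d <| by ext i; fin_cases i <;> simp [mul_div_cancel₀ _ hd]

def nearAxesCone (M : ℝ) : Set (Fin 3 → ℝ) :=
  {v | 0 ≤ v 0 ∧ 0 ≤ v 1 ∧ 0 ≤ v 2 ∧ (v 1 ≤ v 2 / 2 + M * v 0 ∨ v 2 ≤ v 1 / 2 + M * v 0)}

theorem isClosed_nearAxesCone (M : ℝ) : IsClosed (nearAxesCone M) := by
  simp only [nearAxesCone, ofPred_and, ofPred_or]
  refine .inter (isClosed_le ?_ ?_) <| .inter (isClosed_le ?_ ?_) <| .inter (isClosed_le ?_ ?_) <|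
    .union (isClosed_le ?_ ?_) (isClosed_le ?_ ?_) <;> fun_prop

theorem smul_mem_nearAxesCone {M : ℝ} {v : Fin 3 → ℝ} (hv : v ∈ nearAxesCone M) {t : ℝ}
    (ht : 0 < t) : t • v ∈ nearAxesCone M := by
  obtain ⟨h0, h1, h2, h12 | h21⟩ := hv
  all_goals simp only [nearAxesCone, mem_ofPred_eq, Pi.smul_apply, smul_eq_mul]
  · refine ⟨by positivity, by positivity, by positivity, Or.inl ?_⟩
    nlinarith
  · refine ⟨by positivity, by positivity, by positivity, Or.inr ?_⟩
    nlinarith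

def hMap (p : ℝ × ℝ) : ℝ × ℝ :=
  (p.1 * ((p.2 - 1) ^ 2 * p.2 ^ 2 + 2 * (p.1 - 1) ^ 2 * p.1) /
      (1 + p.1 * (p.1 - 1) ^ 2 * p.2 * (p.2 - 1) ^ 2),
    p.2 * ((p.1 - 1) ^ 2 * p.1 ^ 2 + 2 * (p.2 - 1) ^ 2 * p.2) /
      (1 + p.1 * (p.1 - 1) ^ 2 * p.2 * (p.2 - 1) ^ 2))

def gMap (p : ℝ × ℝ) : ℝ × ℝ :=
  ((p.1 ^ 2 + 1) / (1 + p.1 ^ 2 * p.2 ^ 2), (p.2 ^ 2 + 1) / (1 + p.1 ^ 2 * p.2 ^ 2))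

theorem hMap_swap (p : ℝ × ℝ) : hMap p.swap = (hMap p).swap := by
  simp only [hMap, Prod.fst_swap, Prod.snd_swap, Prod.swap_prod_mk, Prod.mk.injEq]
  constructor <;> ring

theorem gMap_swap (p : ℝ × ℝ) : gMap p.swap = (gMap p).swap := by
  simp only [gMap, Prod.fst_swap, Prod.snd_swap, Prod.swap_prod_mk, Prod.mk.injEq]
  constructor <;> ring

theorem gMap_pos (p : ℝ × ℝ) : 0 < (gMap p).1 ∧ 0 < (gMap p).2 :=
  ⟨by unfold gMap; positivity, by unfold gMap; positivity⟩

theorem gMap_le_one_or (p : ℝ × ℝ) :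
    (gMap p).1 ≤ 1 ∨ (gMap p).2 ≤ 1 ∨ ((gMap p).1 ≤ 2 ∧ (gMap p).2 ≤ 2) := by
  obtain ⟨x, y⟩ := p
  have hD : 0 < 1 + x ^ 2 * y ^ 2 := by positivity
  simp only [gMap, div_le_iff₀ hD]
  rcases le_total 1 (y ^ 2) with hy | hy
  · left; nlinarith [sq_nonneg x]
  rcases le_total 1 (x ^ 2) with hx | hx
  · right; left; nlinarith [sq_nonneg y]
  · right; right; constructor <;> nlinarith [sq_nonneg (x * y)]

theorem hMap_nonneg {a b : ℝ} (ha : 0 ≤ a) (hb : 0 ≤ b) :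
    0 ≤ (hMap (a, b)).1 ∧ 0 ≤ (hMap (a, b)).2 :=
  ⟨by unfold hMap; positivity, by unfold hMap; positivity⟩

theorem hMap_snd_le_of_le_one {a b : ℝ} (ha : 0 ≤ a) (hb : 0 ≤ b) (hb1 : b ≤ 1) :
    (hMap (a, b)).2 ≤ (hMap (a, b)).1 / 2 + 1 := by
  set D := 1 + a * (a - 1) ^ 2 * b * (b - 1) ^ 2
  have hD : 1 ≤ D := le_add_of_nonneg_right (by positivity)
  have hbb : (b - 1) ^ 2 * b ^ 2 ≤ 1 / 16 := by
    have h0 : 0 ≤ b * (1 - b) := mul_nonneg hb (by linarith)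
    have h1 : b * (1 - b) ≤ 1 / 4 := by nlinarith [sq_nonneg (b - 1 / 2)]
    calc (b - 1) ^ 2 * b ^ 2 = (b * (1 - b)) ^ 2 := by ring
      _ ≤ (1 / 4) ^ 2 := by gcongr
      _ = 1 / 16 := by norm_num
  have key : (a - 1) ^ 2 * a ^ 2 * (b - 1) + (2 - a / 2) * ((b - 1) ^ 2 * b ^ 2) ≤ D := by
    have : (a - 1) ^ 2 * a ^ 2 * (b - 1) ≤ 0 :=
      mul_nonpos_of_nonneg_of_nonpos (by positivity) (by linarith)
    nlinarith [mul_nonneg ha (mul_nonneg (sq_nonneg (b - 1)) (sq_nonneg b))]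
  calc (hMap (a, b)).2
      = (hMap (a, b)).1 / 2 +
          ((a - 1) ^ 2 * a ^ 2 * (b - 1) + (2 - a / 2) * ((b - 1) ^ 2 * b ^ 2)) / D := by
        simp only [hMap]; field_simp; ring
    _ ≤ (hMap (a, b)).1 / 2 + 1 := by grw [div_le_one_of_le₀ key (by positivity)]

theorem hMap_fst_le_of_le_two {a b : ℝ} (ha : 0 ≤ a) (hb : 0 ≤ b) (ha2 : a ≤ 2) (hb2 : b ≤ 2) :
    (hMap (a, b)).1 ≤ 16 := by
  have hD : 1 ≤ 1 + a * (a - 1) ^ 2 * b * (b - 1) ^ 2 := le_add_of_nonneg_right (by positivity)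
  have ha1 : (a - 1) ^ 2 ≤ 1 := by nlinarith
  have hb1 : (b - 1) ^ 2 ≤ 1 := by nlinarith
  have hbb : (b - 1) ^ 2 * b ^ 2 ≤ 4 := by nlinarith [sq_nonneg b]
  simp only [hMap]
  rw [div_le_iff₀ (by positivity)]
  nlinarith [mul_le_mul ha2 hbb (by positivity) (by norm_num), mul_le_mul ha1 ha2 ha (by norm_num)]

theorem hMap_mem_nearAxesCone {a b : ℝ} (ha : 0 ≤ a) (hb : 0 ≤ b)
    (hab : a ≤ 1 ∨ b ≤ 1 ∨ (a ≤ 2 ∧ b ≤ 2)) :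
    ![1, (hMap (a, b)).1, (hMap (a, b)).2] ∈ nearAxesCone 16 := by
  obtain ⟨hS, hT⟩ := hMap_nonneg ha hb
  refine ⟨zero_le_one, hS, hT, ?_⟩
  simp only [Matrix.cons_val_zero, Matrix.cons_val_one, Matrix.cons_val_two, Matrix.head_cons,
    Matrix.tail_cons, mul_one]
  rcases hab with ha1 | hb1 | ⟨ha2, hb2⟩
  · have h := hMap_snd_le_of_le_one hb ha ha1
    rw [show (b, a) = (a, b).swap from rfl, hMap_swap] at h
    left; simp only [Prod.fst_swap, Prod.snd_swap] at h; linarith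
  · right; linarith [hMap_snd_le_of_le_one ha hb hb1]
  · left; linarith [hMap_fst_le_of_le_two ha hb ha2 hb2]

def segmentsAtInf : Set (ℙ ℝ (Fin 3 → ℝ)) :=
  {q | ∃ u : ℝ, 0 ≤ u ∧ u ≤ 1 / 2 ∧
      q = Projectivization.mk ℝ ![0, u, 1]
        (by intro hv; have := congrFun hv 2; simp at this)} ∪
  {q | ∃ v : ℝ, 0 ≤ v ∧ v ≤ 1 / 2 ∧
      q = Projectivization.mk ℝ ![0, 1, v]
        (by intro hv; have := congrFun hv 1; simp at this)}

theorem mk_mem_segmentsAtInf {M : ℝ} {v : Fin 3 → ℝ} (hv : v ≠ 0) (hvC : v ∈ nearAxesCone M)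
    (h0 : v 0 = 0) : mk ℝ v hv ∈ segmentsAtInf := by
  obtain ⟨-, h1, h2, h12 | h21⟩ := hvC
  · rw [h0, mul_zero, add_zero] at h12
    have h2pos : 0 < v 2 := lt_of_le_of_ne h2 fun h => hv <| by
      ext i; fin_cases i <;> simp [h0, ← h]; linarith
    refine Or.inl ⟨v 1 / v 2, by positivity, (div_le_iff₀ h2pos).2 (by linarith), ?_⟩
    refine (mk_eq_mk_iff' ℝ _ _ _ _).2 ⟨v 2, ?_⟩
    ext i; fin_cases i <;> simp [h0, mul_div_cancel₀ _ h2pos.ne']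
  · rw [h0, mul_zero, add_zero] at h21
    have h1pos : 0 < v 1 := lt_of_le_of_ne h1 fun h => hv <| by
      ext i; fin_cases i <;> simp [h0, ← h]; linarith
    refine Or.inr ⟨v 2 / v 1, by positivity, (div_le_iff₀ h1pos).2 (by linarith), ?_⟩
    refine (mk_eq_mk_iff' ℝ _ _ _ _).2 ⟨v 1, ?_⟩
    ext i; fin_cases i <;> simp [h0, mul_div_cancel₀ _ h1pos.ne']

theorem ptsAtInf_range_hMap_comp_gMap_subset :
    ptsAtInf (range (hMap ∘ gMap)) ⊆ segmentsAtInf := by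
  have hclosed := isClosed_setOf_exists_mk_of_cone (isClosed_nearAxesCone 16)
    fun _ hv _ ht => smul_mem_nearAxesCone hv ht
  have hsub : embR2 '' range (hMap ∘ gMap) ⊆
      {q | ∃ v, ∃ hv : v ≠ 0, v ∈ nearAxesCone 16 ∧ mk ℝ v hv = q} := by
    rintro _ ⟨_, ⟨p, rfl⟩, rfl⟩
    exact ⟨_, _, hMap_mem_nearAxesCone (gMap_pos p).1.le (gMap_pos p).2.le (gMap_le_one_or p), rfl⟩
  rintro q ⟨hq, hq_inf⟩
  obtain ⟨v, hv, hvC, rfl⟩ := closure_minimal hsub hclosed hq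
  exact mk_mem_segmentsAtInf hv hvC ((mk_mem_lineAtInf_iff hv).1 hq_inf)

/-- `(2 a⁴)⁻¹ • (den, a · num₁, b · num₂)` for `hMap (a, b) = (a · num₁ / den, b · num₂ / den)`,
written in `t = a⁻¹`: a polynomial in `(t, b)`, so `a → ∞` becomes continuity at `t = 0`. -/
def hAtInf (t b : ℝ) : Fin 3 → ℝ :=
  ![(t ^ 4 + t * (1 - t) ^ 2 * b * (b - 1) ^ 2) / 2,
    (1 - t) ^ 2 + t ^ 3 * (b - 1) ^ 2 * b ^ 2 / 2,
    b * ((1 - t) ^ 2 + 2 * (b - 1) ^ 2 * b * t ^ 4) / 2]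

theorem continuous_hAtInf : Continuous fun p : ℝ × ℝ => hAtInf p.1 p.2 := by
  unfold hAtInf; fun_prop

theorem hAtInf_zero_left (b : ℝ) : hAtInf 0 b = ![0, 1, b / 2] := by
  ext i; fin_cases i <;> simp [hAtInf]

theorem hAtInf_zero_pos {t b : ℝ} (ht : 0 < t) (hb : 0 ≤ b) : 0 < hAtInf t b 0 := by
  simp only [hAtInf, Matrix.cons_val_zero]; positivity

theorem hMap_inv_eq {t b : ℝ} (ht : 0 < t) (hb : 0 ≤ b) :
    hMap (t⁻¹, b) = (hAtInf t b 1 / hAtInf t b 0, hAtInf t b 2 / hAtInf t b 0) := by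
  have h0 := hAtInf_zero_pos ht hb
  simp only [hAtInf, Matrix.cons_val_zero, Matrix.cons_val_one, Matrix.cons_val_two,
    Matrix.head_cons, Matrix.tail_cons] at h0 ⊢
  simp only [hMap, Prod.mk.injEq]
  constructor <;> field_simp
  ring

theorem gMap_div_left {c y : ℝ} (hc : c ≠ 0) (hy : y ≠ 0) :
    gMap (c / y, y) = (((1 + c ^ 2) * y ^ 2 / (c ^ 2 + y ^ 2))⁻¹, (y ^ 2 + 1) / (1 + c ^ 2)) := by
  simp only [gMap, Prod.mk.injEq]
  constructor <;> field_simp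

theorem tendsto_hAtInf_hyperbola {c : ℝ} (hc : c ≠ 0) :
    Tendsto (fun y => hAtInf ((1 + c ^ 2) * y ^ 2 / (c ^ 2 + y ^ 2)) ((y ^ 2 + 1) / (1 + c ^ 2)))
      (𝓝 0) (𝓝 ![0, 1, (1 + c ^ 2)⁻¹ / 2]) := by
  have hcont : Continuous fun y : ℝ =>
      ((1 + c ^ 2) * y ^ 2 / (c ^ 2 + y ^ 2), (y ^ 2 + 1) / (1 + c ^ 2)) := by
    have : ∀ y : ℝ, c ^ 2 + y ^ 2 ≠ 0 := fun y => by positivity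
    fun_prop (disch := assumption)
  have := (continuous_hAtInf.comp hcont).tendsto 0
  simpa [Function.comp_def, hAtInf_zero_left] using this

theorem mk_mem_closure_range_of_ne_zero {c : ℝ} (hc : c ≠ 0) :
    mk ℝ ![0, 1, (1 + c ^ 2)⁻¹ / 2] (fun h => one_ne_zero (congrFun h 1)) ∈
        closure (embR2 '' range (hMap ∘ gMap)) ∧
      mk ℝ ![0, (1 + c ^ 2)⁻¹ / 2, 1] (fun h => one_ne_zero (congrFun h 2)) ∈
        closure (embR2 '' range (hMap ∘ gMap)) := by
  set t := fun y : ℝ => (1 + c ^ 2) * y ^ 2 / (c ^ 2 + y ^ 2)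
  set b := fun y : ℝ => (y ^ 2 + 1) / (1 + c ^ 2)
  set w := fun y => hAtInf (t y) (b y)
  have hpts : ∀ y ≠ 0, ∃ hd : w y 0 ≠ 0,
      embR2 (hMap (gMap (c / y, y))) = mk ℝ ![w y 0, w y 1, w y 2] (fun h => hd (congrFun h 0)) ∧
        embR2 (hMap (gMap (y, c / y))) = mk ℝ ![w y 0, w y 2, w y 1]
          (fun h => hd (congrFun h 0)) := by
    intro y hy
    have ht : 0 < t y := by positivity
    have hb : 0 ≤ b y := by positivity
    have hd := (hAtInf_zero_pos ht hb).ne'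
    have hg := gMap_div_left hc hy
    refine ⟨hd, ?_, ?_⟩
    · rw [hg, hMap_inv_eq ht hb, embR2_div hd]
    · rw [show (y, c / y) = (c / y, y).swap from rfl, gMap_swap, hMap_swap, hg,
        hMap_inv_eq ht hb, Prod.swap_prod_mk, embR2_div hd]
  have hw i := (tendsto_pi_nhds.1 (tendsto_hAtInf_hyperbola hc) i).mono_left
    (nhdsWithin_le_nhds (s := {0}ᶜ))
  constructor
  · refine mk_mem_closure_of_tendsto _
      (by simpa using (hw 0).matrixVecCons ((hw 1).matrixVecCons ((hw 2).matrixVecCons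
        tendsto_const_nhds))) ?_
    filter_upwards [self_mem_nhdsWithin] with y hy
    obtain ⟨hd, h, -⟩ := hpts y hy
    exact ⟨_, by rw [← h]; exact mem_image_of_mem _ (mem_range_self (c / y, y))⟩
  · refine mk_mem_closure_of_tendsto _
      (by simpa using (hw 0).matrixVecCons ((hw 2).matrixVecCons ((hw 1).matrixVecCons
        tendsto_const_nhds))) ?_
    filter_upwards [self_mem_nhdsWithin] with y hy
    obtain ⟨hd, -, h⟩ := hpts y hy
    exact ⟨_, by rw [← h]; exact mem_image_of_mem _ (mem_range_self (y, c / y))⟩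

theorem mk_mem_closure_range_of_mem_Ioo {u : ℝ} (hu : u ∈ Ioo (0 : ℝ) (1 / 2)) :
    mk ℝ ![0, 1, u] (fun h => one_ne_zero (congrFun h 1)) ∈
        closure (embR2 '' range (hMap ∘ gMap)) ∧
      mk ℝ ![0, u, 1] (fun h => one_ne_zero (congrFun h 2)) ∈
        closure (embR2 '' range (hMap ∘ gMap)) := by
  obtain ⟨hu0, hu1⟩ := hu
  have hpos : 0 < (2 * u)⁻¹ - 1 := by rw [sub_pos, one_lt_inv₀] <;> linarith
  obtain ⟨c, hc, rfl⟩ : ∃ c : ℝ, c ≠ 0 ∧ (1 + c ^ 2)⁻¹ / 2 = u := by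
    refine ⟨√((2 * u)⁻¹ - 1), (Real.sqrt_pos.2 hpos).ne', ?_⟩
    rw [Real.sq_sqrt hpos.le, add_sub_cancel, inv_inv, mul_div_cancel_left₀ _ two_ne_zero]
  exact mk_mem_closure_range_of_ne_zero hc

theorem segmentsAtInf_subset_closure :
    segmentsAtInf ⊆ closure (embR2 '' range (hMap ∘ gMap)) := by
  have hcl {u : ℝ} (hu0 : 0 ≤ u) (hu1 : u ≤ 1 / 2) : u ∈ closure (Ioo (0 : ℝ) (1 / 2)) := by
    rw [closure_Ioo (by norm_num)]; exact ⟨hu0, hu1⟩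
  rintro q (⟨u, hu0, hu1, rfl⟩ | ⟨u, hu0, hu1, rfl⟩)
  · refine MapsTo.closure_left (fun u hu => (mk_mem_closure_range_of_mem_Ioo hu).2)
      ?_ isClosed_closure (hcl hu0 hu1)
    exact continuous_mk'.comp ((by fun_prop : Continuous fun u : ℝ => ![0, u, 1]).subtype_mk _)
  · refine MapsTo.closure_left (fun u hu => (mk_mem_closure_range_of_mem_Ioo hu).1)
      ?_ isClosed_closure (hcl hu0 hu1)
    exact continuous_mk'.comp ((by fun_prop : Continuous fun u : ℝ => ![0, 1, u]).subtype_mk _)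

theorem ptsAtInf_range_hMap_comp_gMap : ptsAtInf (range (hMap ∘ gMap)) = segmentsAtInf :=
  ptsAtInf_range_hMap_comp_gMap_subset.antisymm fun q hq =>
    ⟨segmentsAtInf_subset_closure hq, by
      obtain ⟨u, -, -, rfl⟩ | ⟨u, -, -, rfl⟩ := hq <;> simp [mk_mem_lineAtInf_iff]⟩

theorem stmt19 :
    ∃ f : ℝ × ℝ → ℝ × ℝ,
      (f = (fun p : ℝ × ℝ =>
          (p.1 * ((p.2 - 1) ^ 2 * p.2 ^ 2 + 2 * (p.1 - 1) ^ 2 * p.1) /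
             (1 + p.1 * (p.1 - 1) ^ 2 * p.2 * (p.2 - 1) ^ 2),
           p.2 * ((p.1 - 1) ^ 2 * p.1 ^ 2 + 2 * (p.2 - 1) ^ 2 * p.2) /
             (1 + p.1 * (p.1 - 1) ^ 2 * p.2 * (p.2 - 1) ^ 2))) ∘
        (fun p : ℝ × ℝ =>
          ((p.1 ^ 2 + 1) / (1 + p.1 ^ 2 * p.2 ^ 2),
           (p.2 ^ 2 + 1) / (1 + p.1 ^ 2 * p.2 ^ 2)))) ∧
      ptsAtInf (Set.range f) =
        {q | ∃ u : ℝ, 0 ≤ u ∧ u ≤ 1 / 2 ∧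
            q = Projectivization.mk ℝ ![0, u, 1]
              (by intro hv; have := congrFun hv 2; simp at this)} ∪
        {q | ∃ v : ℝ, 0 ≤ v ∧ v ≤ 1 / 2 ∧
            q = Projectivization.mk ℝ ![0, 1, v]
              (by intro hv; have := congrFun hv 1; simp at this)} :=
  ⟨hMap ∘ gMap, rfl, ptsAtInf_range_hMap_comp_gMap⟩
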